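/- arXiv:2502.02380 — 2 statements merged into one kernel-verified Lean document; each statement's English description precedes it below -/
import Mathlib

section
/- In a cLD election, a vertex x is a casting voter in every cost-minimizing feasible solution if at least one of the following holds: (a) x is the root of an upwards-directed tree component (x has no outgoing edges and all other vertices of its component reach it); (b) x is the unique minimizer of v(u) + ∑_{i∈Z\{u}} d(i) over its cycle Z in a component where every vertex satisfies v(i) ≥ d(i); or (c) v(x) < d(x). (Assume the delegation graph has maximum out-degree at most 1.) -/
/-- One delegation step: `a` delegates along its selected edge to `b`. -/
def dStep {α : Type} (Dn : α → Option α) (a b : α) : Prop := Dn a = some b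

/-- A feasible solution `(Cs, Dn)` of a cLD election with delegation graph `E`:
`Dn` selects exactly one outgoing edge (an edge of `E`) for each vertex not in
`Cs` and none for vertices of `Cs`, and every vertex outside `Cs` has a
directed path through selected edges to a vertex of `Cs`. -/
def FeasibleSol {α : Type} [DecidableEq α] (E : α → α → Prop) (Cs : Finset α)
    (Dn : α → Option α) : Prop :=
  (∀ i, Dn i = none ↔ i ∈ Cs) ∧ (∀ i j, Dn i = some j → E i j) ∧
  (∀ i, i ∉ Cs → ∃ j ∈ Cs, Relation.ReflTransGen (dStep Dn) i j)

/-- Total cost of a solution with casting voters `Cs`: voting costs for members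
of `Cs` plus delegating costs for everyone else. -/
def elCost {α : Type} [Fintype α] [DecidableEq α] (v d : α → ℕ) (Cs : Finset α) : ℕ :=
  ∑ i ∈ Cs, v i + ∑ i ∈ Csᶜ, d i

/-- Voting power of a casting voter `j`: the number of voters whose delegation
path leads to `j` (including `j` itself). -/
noncomputable def votingPower {α : Type} (Dn : α → Option α) (j : α) : ℕ :=
  Set.ncard {i | Relation.ReflTransGen (dStep Dn) i j}

/-- Weak connectivity in the delegation graph given by `next`. -/
def wConn {α : Type} (next : α → Option α) (a b : α) : Prop :=
  Relation.ReflTransGen (fun p q => dStep next p q ∨ dStep next q p) a b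

/-- Walking around the cycle `Z` with the modified delegation function reaches `x`. -/
private lemma cycleReach {α : Type} (next Dn' : α → Option α) (Z : Finset α) (x : α)
    (hclosed : ∀ z ∈ Z, ∃ w ∈ Z, next z = some w)
    (hDn' : ∀ z ∈ Z, z ≠ x → Dn' z = next z) :
    ∀ z, Relation.ReflTransGen (dStep next) z x → z ∈ Z →
      Relation.ReflTransGen (dStep Dn') z x := by
  intro z h
  induction h using Relation.ReflTransGen.head_induction_on with
  | refl => intro _; exact Relation.ReflTransGen.refl
  | @head a c hac hcx ih =>
    intro haZ
    by_cases hax : a = x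
    · subst hax; exact Relation.ReflTransGen.refl
    · obtain ⟨w, hwZ, hnw⟩ := hclosed a haZ
      have h1 : next a = some c := hac
      rw [hnw] at h1
      injection h1 with h1
      subst h1
      have hstep : dStep Dn' a w := by
        show Dn' a = some w
        rw [hDn' a haZ hax]; exact hnw
      exact Relation.ReflTransGen.head hstep (ih hwZ)

/-- Rerouting a delegation path through a modified region `Z`. -/
private lemma reroute {α : Type} [DecidableEq α] (Dn Dn' : α → Option α)
    (Cs Cs' : Finset α) (Z : Finset α)
    (hagree : ∀ i, i ∉ Z → Dn' i = Dn i)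
    (hW : ∀ w ∈ Z, ∃ k ∈ Cs', Relation.ReflTransGen (dStep Dn') w k)
    (hCs : ∀ j ∈ Cs, j ∉ Z → j ∈ Cs') :
    ∀ i j, Relation.ReflTransGen (dStep Dn) i j → j ∈ Cs →
      ∃ k ∈ Cs', Relation.ReflTransGen (dStep Dn') i k := by
  intro i j h hj
  induction h using Relation.ReflTransGen.head_induction_on with
  | refl =>
    by_cases hjZ : j ∈ Z
    · exact hW j hjZ
    · exact ⟨j, hCs j hj hjZ, Relation.ReflTransGen.refl⟩
  | @head a c hac hcj ih =>
    by_cases haZ : a ∈ Z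
    · exact hW a haZ
    · obtain ⟨k, hk, hp⟩ := ih
      have hstep : dStep Dn' a c := by
        show Dn' a = some c
        rw [hagree a haZ]; exact hac
      exact ⟨k, hk, Relation.ReflTransGen.head hstep hp⟩

/-- Forward delegation paths stay inside a `next`-closed set `Z`. -/
private lemma stayInZ {α : Type} (next Dn : α → Option α) (Z : Finset α)
    (hfeas2 : ∀ i j, Dn i = some j → dStep next i j)
    (hclosed : ∀ z ∈ Z, ∃ w ∈ Z, next z = some w) :
    ∀ a b, Relation.ReflTransGen (dStep Dn) a b → a ∈ Z → b ∈ Z := by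
  intro a b h haZ
  induction h with
  | refl => exact haZ
  | @tail b c hab hbc ih =>
    obtain ⟨w, hwZ, hnw⟩ := hclosed b ih
    have h1 : next b = some c := hfeas2 b c hbc
    rw [hnw] at h1
    injection h1 with h1
    subst h1
    exact hwZ

/-- In a cLD election with maximum out-degree at most 1 (delegation graph
`next : α → Option α`), a vertex `x` is a casting voter in every
cost-minimizing feasible solution if at least one of the following holds:
(a) `x` is the root of an upwards-directed tree component (no outgoing edge,
and every vertex of its weakly connected component has a directed path to it);
(b) `x` lies on a cycle `Z` of a component in which every voter's voting cost
is at least their delegating cost, and `x` is the unique minimizer of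
`v u + ∑_{i ∈ Z \ {u}} d i` over the cycle; or (c) `v x < d x`. -/
theorem casting_in_every_cost_minimizing {α : Type} [Fintype α] [DecidableEq α]
    (next : α → Option α) (v d : α → ℕ) (x : α)
    (hcond :
      (next x = none ∧ ∀ y : α, wConn next y x → Relation.ReflTransGen (dStep next) y x) ∨
      (∃ Z : Finset α, x ∈ Z ∧
        (∀ z ∈ Z, ∃ w ∈ Z, next z = some w) ∧
        (∀ z ∈ Z, ∀ z' ∈ Z, Relation.ReflTransGen (dStep next) z z') ∧
        (∀ i : α, wConn next i x → d i ≤ v i) ∧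
        (∀ u ∈ Z, u ≠ x →
          v x + ∑ i ∈ Z.erase x, d i < v u + ∑ i ∈ Z.erase u, d i)) ∨
      (v x < d x)) :
    ∀ (Cs : Finset α) (Dn : α → Option α), FeasibleSol (dStep next) Cs Dn →
      (∀ (Cs' : Finset α) (Dn' : α → Option α), FeasibleSol (dStep next) Cs' Dn' →
        elCost v d Cs ≤ elCost v d Cs') →
      x ∈ Cs := by
  intro Cs Dn hfeas hopt
  obtain ⟨h1, h2, h3⟩ := hfeas
  by_contra hx
  rcases hcond with ⟨hnone, _⟩ | ⟨Z, hxZ, hclosed, hreach, hcomp, hmin⟩ | hvd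
  · -- case (a): next x = none forces Dn x = none, so x ∈ Cs
    rcases hDx : Dn x with _ | j
    · exact hx ((h1 x).mp hDx)
    · have hE : dStep next x j := h2 x j hDx
      have : next x = some j := hE
      rw [hnone] at this
      cases this
  · -- case (b): cycle Z
    -- find a casting voter on the cycle
    have hZCs : ∃ u, u ∈ Cs ∩ Z := by
      by_contra hempty
      push_neg at hempty
      obtain ⟨j, hj, hp⟩ := h3 x hx
      exact hempty j (Finset.mem_inter.mpr ⟨hj, stayInZ next Dn Z h2 hclosed x j hp hxZ⟩)
    obtain ⟨u, huSmem⟩ := hZCs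
    have huCs : u ∈ Cs := (Finset.mem_inter.mp huSmem).1
    have huZ : u ∈ Z := (Finset.mem_inter.mp huSmem).2
    have hux : u ≠ x := fun h => hx (h ▸ huCs)
    set Dn' : α → Option α :=
      fun i => if i ∈ Z then (if i = x then none else next i) else Dn i with hDn'
    set Cs' : Finset α := insert x (Cs \ Z) with hCs'
    have hxCs' : x ∈ Cs' := Finset.mem_insert_self _ _
    have hDn'Z : ∀ z ∈ Z, z ≠ x → Dn' z = next z := by
      intro z hz hzx; rw [hDn']; simp [hz, hzx]
    have hcyc : ∀ w ∈ Z, Relation.ReflTransGen (dStep Dn') w x :=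
      fun w hw => cycleReach next Dn' Z x hclosed hDn'Z w (hreach w hw x hxZ) hw
    have hmemCs' : ∀ j, j ∈ Cs → j ∉ Z → j ∈ Cs' := by
      intro j hj hjZ
      rw [hCs']
      exact Finset.mem_insert_of_mem (Finset.mem_sdiff.mpr ⟨hj, hjZ⟩)
    have hfeas' : FeasibleSol (dStep next) Cs' Dn' := by
      refine ⟨?_, ?_, ?_⟩
      · intro i
        by_cases hiZ : i ∈ Z
        · by_cases hix : i = x
          · subst hix
            constructor
            · intro _; exact hxCs'
            · intro _; rw [hDn']; simp [hiZ]
          · obtain ⟨w, hwZ, hnw⟩ := hclosed i hiZ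
            have hval : Dn' i = some w := by rw [hDn']; simp [hiZ, hix, hnw]
            rw [hval]
            constructor
            · intro h; cases h
            · intro hiC
              exfalso
              rcases Finset.mem_insert.mp (hCs' ▸ hiC) with h | h
              · exact hix h
              · exact (Finset.mem_sdiff.mp h).2 hiZ
        · have hval : Dn' i = Dn i := by rw [hDn']; simp [hiZ]
          rw [hval, h1 i]
          constructor
          · intro h; exact hmemCs' i h hiZ
          · intro hiC
            rcases Finset.mem_insert.mp (hCs' ▸ hiC) with h | h
            · exact absurd (h ▸ hxZ) hiZ
            · exact (Finset.mem_sdiff.mp h).1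
      · intro i j hij
        by_cases hiZ : i ∈ Z
        · by_cases hix : i = x
          · exfalso; subst hix; rw [hDn'] at hij; simp [hiZ] at hij
          · have : next i = some j := by
              rw [hDn'] at hij; simpa [hiZ, hix] using hij
            exact this
        · have : Dn i = some j := by rw [hDn'] at hij; simpa [hiZ] using hij
          exact h2 i j this
      · intro i hi
        by_cases hiZ : i ∈ Z
        · exact ⟨x, hxCs', hcyc i hiZ⟩
        · have hiCs : i ∉ Cs := fun h => hi (hmemCs' i h hiZ)
          obtain ⟨j, hj, hp⟩ := h3 i hiCs
          exact reroute Dn Dn' Cs Cs' Z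
            (fun a haZ => by rw [hDn']; simp [haZ])
            (fun w hw => ⟨x, hxCs', hcyc w hw⟩)
            hmemCs' i j hp hj
    have hle := hopt Cs' Dn' hfeas'
    -- cost comparison
    have hxCsc : x ∈ Csᶜ := Finset.mem_compl.mpr hx
    set S : Finset α := Cs ∩ Z with hSdef
    have hxS : x ∉ S := fun h => hx (Finset.mem_inter.mp h).1
    have huS : u ∈ S := huSmem
    have hdz : ∀ z ∈ Z, d z ≤ v z := fun z hz =>
      hcomp z (Relation.ReflTransGen.mono (fun a b h => Or.inl h) z x (hreach z hz x hxZ))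
    have hSsub : S ⊆ Z.erase x := fun i hiS =>
      Finset.mem_erase.mpr ⟨fun h => hxS (h ▸ hiS), (Finset.mem_inter.mp hiS).2⟩
    set T : Finset α := Z.erase x \ S with hTdef
    have e1 : ∑ i ∈ T, d i + ∑ i ∈ S, d i = ∑ i ∈ Z.erase x, d i := Finset.sum_sdiff hSsub
    have hxZu : x ∈ Z.erase u := Finset.mem_erase.mpr ⟨Ne.symm hux, hxZ⟩
    have e2a : d x + ∑ i ∈ (Z.erase u).erase x, d i = ∑ i ∈ Z.erase u, d i :=
      Finset.add_sum_erase _ _ hxZu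
    have e2b : (Z.erase u).erase x = T ∪ S.erase u := by
      ext i
      simp only [hTdef, hSdef, Finset.mem_erase, Finset.mem_sdiff, Finset.mem_union,
        Finset.mem_inter]
      constructor
      · rintro ⟨hix, hiu, hiZ⟩
        by_cases hiCs : i ∈ Cs
        · exact Or.inr ⟨hiu, hiCs, hiZ⟩
        · exact Or.inl ⟨⟨hix, hiZ⟩, fun h => hiCs h.1⟩
      · rintro (⟨⟨hix, hiZ⟩, hiS⟩ | ⟨hiu, hiCs, hiZ⟩)
        · refine ⟨hix, ?_, hiZ⟩
          intro h
          exact hiS ⟨h ▸ huCs, h ▸ huZ⟩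
        · exact ⟨fun h => hx (h ▸ hiCs), hiu, hiZ⟩
    have hTSdisj : Disjoint T (S.erase u) := Finset.disjoint_left.mpr (by
      intro i hiT hiS
      exact (Finset.mem_sdiff.mp hiT).2 (Finset.mem_of_mem_erase hiS))
    have e2c : ∑ i ∈ T ∪ S.erase u, d i = ∑ i ∈ T, d i + ∑ i ∈ S.erase u, d i :=
      Finset.sum_union hTSdisj
    have e3 : v u + ∑ i ∈ S.erase u, v i = ∑ i ∈ S, v i := Finset.add_sum_erase _ _ huS
    have e4 : ∑ i ∈ S.erase u, d i ≤ ∑ i ∈ S.erase u, v i :=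
      Finset.sum_le_sum (fun i hi =>
        hdz i (Finset.mem_inter.mp (Finset.mem_of_mem_erase hi)).2)
    have hk := hmin u huZ hux
    rw [← e1, ← e2a, e2b, e2c] at hk
    have key : v x + ∑ i ∈ S, d i < ∑ i ∈ S, v i + d x := by omega
    -- global sums
    have g1 : ∑ i ∈ S, v i + ∑ i ∈ Cs \ Z, v i = ∑ i ∈ Cs, v i :=
      Finset.sum_inter_add_sum_sdiff Cs Z v
    have g2 : d x + ∑ i ∈ Csᶜ.erase x, d i = ∑ i ∈ Csᶜ, d i :=
      Finset.add_sum_erase _ _ hxCsc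
    have hxnotin : x ∉ Cs \ Z := fun h => (Finset.mem_sdiff.mp h).2 hxZ
    have g3 : ∑ i ∈ Cs', v i = v x + ∑ i ∈ Cs \ Z, v i := by
      rw [hCs']; exact Finset.sum_insert hxnotin
    have g4 : Cs'ᶜ = Csᶜ.erase x ∪ S := by
      ext i
      rw [hCs', hSdef]
      simp only [Finset.mem_compl, Finset.mem_insert, Finset.mem_sdiff, Finset.mem_union,
        Finset.mem_erase, Finset.mem_inter]
      constructor
      · intro h
        by_cases hiCs : i ∈ Cs
        · refine Or.inr ⟨hiCs, ?_⟩
          by_contra hiZ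
          exact h (Or.inr ⟨hiCs, hiZ⟩)
        · refine Or.inl ⟨?_, hiCs⟩
          intro hix
          exact h (Or.inl hix)
      · rintro (⟨hix, hiCs⟩ | ⟨hiCs, hiZ⟩)
        · rintro (rfl | ⟨hc, _⟩)
          · exact hix rfl
          · exact hiCs hc
        · rintro (rfl | ⟨_, hnZ⟩)
          · exact hx hiCs
          · exact hnZ hiZ
    have g4disj : Disjoint (Csᶜ.erase x) S := Finset.disjoint_left.mpr (by
      intro i hiE hiS
      exact Finset.mem_compl.mp (Finset.mem_of_mem_erase hiE) (Finset.mem_inter.mp hiS).1)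
    have g5 : ∑ i ∈ Cs'ᶜ, d i = ∑ i ∈ Csᶜ.erase x, d i + ∑ i ∈ S, d i := by
      rw [g4]; exact Finset.sum_union g4disj
    unfold elCost at hle
    rw [g3, g5] at hle
    omega
  · -- case (c): v x < d x
    set Dn' : α → Option α := fun i => if i = x then none else Dn i with hDn'
    have hfeas' : FeasibleSol (dStep next) (insert x Cs) Dn' := by
      refine ⟨?_, ?_, ?_⟩
      · intro i
        by_cases hix : i = x
        · subst hix
          constructor
          · intro _; exact Finset.mem_insert_self _ _
          · intro _; rw [hDn']; simp
        · have hval : Dn' i = Dn i := by rw [hDn']; simp [hix]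
          rw [hval, h1 i]
          constructor
          · exact Finset.mem_insert_of_mem
          · intro h
            rcases Finset.mem_insert.mp h with h | h
            · exact absurd h hix
            · exact h
      · intro i j hij
        by_cases hix : i = x
        · exfalso; rw [hDn'] at hij; simp [hix] at hij
        · exact h2 i j (by rw [hDn'] at hij; simpa [hix] using hij)
      · intro i hi
        have hiCs : i ∉ Cs := fun h => hi (Finset.mem_insert_of_mem h)
        obtain ⟨j, hj, hp⟩ := h3 i hiCs
        exact reroute Dn Dn' Cs (insert x Cs) {x}
          (fun a haZ => by
            rw [hDn']
            simp only [Finset.mem_singleton] at haZ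
            simp [haZ])
          (fun w hw =>
            ⟨x, Finset.mem_insert_self _ _, by
              rw [Finset.mem_singleton] at hw
              rw [hw]⟩)
          (fun j hj _ => Finset.mem_insert_of_mem hj) i j hp hj
    have hle := hopt (insert x Cs) Dn' hfeas'
    have e1 : ∑ i ∈ insert x Cs, v i = v x + ∑ i ∈ Cs, v i := Finset.sum_insert hx
    have e2 : (insert x Cs)ᶜ = Csᶜ.erase x := Finset.compl_insert
    have e3 : d x + ∑ i ∈ Csᶜ.erase x, d i = ∑ i ∈ Csᶜ, d i :=
      Finset.add_sum_erase _ _ (Finset.mem_compl.mpr hx)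
    unfold elCost at hle
    rw [e1, e2] at hle
    omega
end

section
/- Let (G, v, d) be a cLD election whose delegation graph is an upwards-directed tree with root x, and suppose v(i) ≥ d(i) for every non-root vertex i. Then the solution where x is the sole casting voter and each other vertex delegates along its unique outgoing edge is feasible, and it is cost-minimizing: its cost v(x) + ∑_{i≠x} d(i) is at most the cost of any feasible solution. -/
/-!
The root has no outgoing edge, so it casts its vote in every feasible solution; every other
vertex then pays either `d i` or `v i ≥ d i`, which is at least what the tree solution charges.
-/

theorem eq_of_reflTransGen_dStep_of_eq_none {α : Type} {Dn : α → Option α} {i j : α}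
    (hij : Relation.ReflTransGen (dStep Dn) i j) (hi : Dn i = none) : i = j := by
  rcases hij.cases_head with h | ⟨k, hik, _⟩
  · exact h
  · rw [dStep, hi] at hik
    cases hik

theorem feasibleSol_singleton_root {α : Type} [DecidableEq α] {next : α → Option α} {x : α}
    (hroot : next x = none) (hreach : ∀ y, Relation.ReflTransGen (dStep next) y x) :
    FeasibleSol (dStep next) {x} next := by
  refine ⟨fun i => ?_, fun _ _ h => h,
    fun i _ => ⟨x, Finset.mem_singleton_self x, hreach i⟩⟩
  rw [Finset.mem_singleton]
  exact ⟨eq_of_reflTransGen_dStep_of_eq_none (hreach i), fun h => h ▸ hroot⟩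

theorem FeasibleSol.mem_of_forall_not_adj {α : Type} [DecidableEq α] {E : α → α → Prop}
    {Cs : Finset α} {Dn : α → Option α} (hsol : FeasibleSol E Cs Dn) {x : α}
    (hx : ∀ j, ¬ E x j) : x ∈ Cs := by
  by_contra hxC
  obtain ⟨j, hj⟩ := Option.ne_none_iff_exists'.mp fun h => hxC ((hsol.1 x).mp h)
  exact hx j (hsol.2.1 x j hj)

theorem add_sum_compl_singleton_le_elCost {α : Type} [Fintype α] [DecidableEq α]
    {v d : α → ℕ} {Cs : Finset α} {x : α} (hx : x ∈ Cs)
    (hvd : ∀ i ∈ Cs, i ≠ x → d i ≤ v i) :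
    v x + ∑ i ∈ ({x}ᶜ : Finset α), d i ≤ elCost v d Cs := by
  have hd_total : ∑ i ∈ ({x}ᶜ : Finset α), d i + d x =
      ∑ i ∈ Cs.erase x, d i + d x + ∑ i ∈ Csᶜ, d i := by
    rw [Finset.sum_erase_add Cs d hx, Finset.sum_add_sum_compl,
      ← Finset.sum_singleton d x, Finset.sum_compl_add_sum]
  have hdv : ∑ i ∈ Cs.erase x, d i ≤ ∑ i ∈ Cs.erase x, v i :=
    Finset.sum_le_sum fun i hi => hvd i (Finset.mem_of_mem_erase hi) (Finset.ne_of_mem_erase hi)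
  rw [elCost, ← Finset.add_sum_erase Cs v hx]
  omega

/-- Let the delegation graph be an upwards-directed tree with root `x`
(encoded by `next : α → Option α` with `next x = none` and every vertex having
a directed path to `x`), and suppose `v i ≥ d i` for every non-root vertex.
Then the solution in which `x` is the sole casting voter and every other
vertex delegates along its unique outgoing edge is feasible, and it is
cost-minimizing: its cost `v x + ∑_{i ≠ x} d i` is at most the cost of any
feasible solution. -/
theorem tree_root_solution_optimal {α : Type} [Fintype α] [DecidableEq α]
    (next : α → Option α) (v d : α → ℕ) (x : α)
    (hroot : next x = none)
    (hreach : ∀ y : α, Relation.ReflTransGen (dStep next) y x)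
    (hvd : ∀ i : α, i ≠ x → d i ≤ v i) :
    FeasibleSol (dStep next) {x} next ∧
    (∀ (Cs : Finset α) (Dn : α → Option α), FeasibleSol (dStep next) Cs Dn →
      v x + ∑ i ∈ ({x}ᶜ : Finset α), d i ≤ elCost v d Cs) := by
  refine ⟨feasibleSol_singleton_root hroot hreach, fun Cs Dn hsol => ?_⟩
  have hx : x ∈ Cs := hsol.mem_of_forall_not_adj fun j hj => by
    rw [dStep, hroot] at hj
    cases hj
  exact add_sum_compl_singleton_le_elCost hx fun i _ => hvd i
end
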